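/- Assume the distributed learning setup and Assumption 1 (F is L-strongly convex with M-Lipschitz gradient, minimized at θ* with ∇F(θ*) = 0). Fix α ∈ (0, 1/2), ξ₁, ξ₂ ≥ 0 and suppose the good event holds: at least k(1−α) + q of the batch deviation functions Z_ℓ satisfy C_α ‖Z_ℓ(θ)‖ ≤ ξ₂‖θ − θ*‖ + ξ₁ for all θ ∈ Θ, where C_α = 2(1−α)/(1−2α). Then for any Byzantine adversary (at each iteration t a set B_t of at most q machines reports arbitrary vectors), the Byzantine Gradient Descent iterates with step size η = L/(2M²) satisfy, whenever ρ := 1 − √(1 − L²/(4M²)) − ξ₂L/(2M²) > 0: ‖θ_t − θ*‖ ≤ (1 − ρ)^t ‖θ_0 − θ*‖ + ηξ₁/ρ for all t ≥ 1. -/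

import Mathlib

/-!
A gradient step is a contraction: strong convexity and the Lipschitz gradient give
`‖θ - η ∇F(θ) - θ*‖ ≤ √(1 - L²/(4M²)) ‖θ - θ*‖`. The geometric median is robust: if a fraction
`1 - α > 1/2` of the points lie within `r` of `x`, the median lies within `C_α r` of `x`. On the
good event at least `k(1-α)` batches are both accurate and free of Byzantine machines, so the
aggregated gradient is within `ξ₂ ‖θ - θ*‖ + ξ₁` of `∇F(θ)`. Hence the error obeys
`e_{t+1} ≤ (1 - ρ) e_t + η ξ₁`, which unrolls to the claimed bound.
-/

open Finset
open scoped Classical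
open scoped RealInnerProductSpace

section GeometricMedian

variable {ι E : Type*} [Fintype ι] [NormedAddCommGroup E]

def IsGeometricMedian (z : ι → E) (m : E) : Prop :=
  ∀ y, ∑ ℓ, ‖m - z ℓ‖ ≤ ∑ ℓ, ‖y - z ℓ‖

/-- Moving from `x` to `m` increases the distance to each point of `G` by at least
`‖m - x‖ - 2r` and decreases every other distance by at most `‖m - x‖`; optimality of `m`
makes the net change nonpositive. -/
theorem IsGeometricMedian.mul_norm_sub_le {z : ι → E} {m x : E} {r : ℝ}
    (hm : IsGeometricMedian z m) (G : Finset ι) (hG : ∀ ℓ ∈ G, ‖z ℓ - x‖ ≤ r) :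
    (2 * #G - Fintype.card ι) * ‖m - x‖ ≤ 2 * #G * r := by
  set D := ‖m - x‖
  have hin : ∀ ℓ ∈ G, ‖x - z ℓ‖ + (D - 2 * r) ≤ ‖m - z ℓ‖ := by
    intro ℓ hℓ
    have h₁ := norm_sub_norm_le (m - x) (z ℓ - x)
    rw [sub_sub_sub_cancel_right] at h₁
    linarith [hG ℓ hℓ, norm_sub_rev x (z ℓ)]
  have hout : ∀ ℓ ∈ Gᶜ, ‖x - z ℓ‖ + -D ≤ ‖m - z ℓ‖ := by
    intro ℓ _
    have h₁ := norm_sub_norm_le (x - z ℓ) (m - z ℓ)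
    rw [sub_sub_sub_cancel_right, norm_sub_rev x m] at h₁
    linarith
  have hsum := add_le_add (sum_le_sum hin) (sum_le_sum hout)
  have hcompl : ((#Gᶜ : ℕ) : ℝ) = Fintype.card ι - #G := by
    rw [card_compl, Nat.cast_sub (card_le_univ G)]
  simp only [sum_add_distrib, sum_const, nsmul_eq_mul, hcompl] at hsum
  have hopt : ∑ ℓ, ‖m - z ℓ‖ ≤ ∑ ℓ, ‖x - z ℓ‖ := hm x
  rw [← sum_add_sum_compl G, ← sum_add_sum_compl G] at hopt
  linarith

theorem IsGeometricMedian.norm_sub_le {z : ι → E} {m x : E} {r α : ℝ}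
    (hm : IsGeometricMedian z m) (hι : 0 < Fintype.card ι) (hα : α < 1 / 2)
    (G : Finset ι) (hGcard : Fintype.card ι * (1 - α) ≤ #G)
    (hG : ∀ ℓ ∈ G, ‖z ℓ - x‖ ≤ r) :
    ‖m - x‖ ≤ 2 * (1 - α) / (1 - 2 * α) * r := by
  have hι' : (0 : ℝ) < Fintype.card ι := by exact_mod_cast hι
  have hα' : 0 < 1 - 2 * α := by linarith
  have hmajority : 0 < 2 * (#G : ℝ) - Fintype.card ι := by nlinarith
  obtain ⟨ℓ, hℓ⟩ : G.Nonempty := card_pos.1 (by exact_mod_cast (by nlinarith : (0 : ℝ) < #G))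
  have hr : 0 ≤ r := (norm_nonneg _).trans (hG ℓ hℓ)
  have hkey := hm.mul_norm_sub_le G hG
  rw [div_mul_eq_mul_div, le_div_iff₀ hα']
  refine le_of_mul_le_mul_left ?_ hmajority
  nlinarith [mul_le_mul_of_nonneg_left hkey hα'.le, mul_nonneg hr (sub_nonneg.2 hGcard)]

theorem IsGeometricMedian.norm_sub_le_of_card_add_card_le {z : ι → E} {m x : E} {R α : ℝ}
    (hm : IsGeometricMedian z m) (hι : 0 < Fintype.card ι) (hα : α < 1 / 2)
    (S T : Finset ι) (hcard : Fintype.card ι * (1 - α) + #T ≤ #S)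
    (hS : ∀ ℓ ∈ S, ℓ ∉ T → 2 * (1 - α) / (1 - 2 * α) * ‖z ℓ - x‖ ≤ R) :
    ‖m - x‖ ≤ R := by
  have hC : 0 < 2 * (1 - α) / (1 - 2 * α) := div_pos (by linarith) (by linarith)
  have hsdiff : (#S : ℝ) ≤ #(S \ T) + #T := by exact_mod_cast card_le_card_sdiff_add_card
  have h := hm.norm_sub_le hι hα (S \ T) (r := R / (2 * (1 - α) / (1 - 2 * α)))
    (by linarith) fun ℓ hℓ => by
      rw [le_div_iff₀ hC, mul_comm]
      exact hS ℓ (mem_sdiff.1 hℓ).1 (mem_sdiff.1 hℓ).2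
  rwa [mul_div_cancel₀ _ hC.ne'] at h

end GeometricMedian

section GradientStep

variable {E : Type*} [NormedAddCommGroup E] [InnerProductSpace ℝ E]

theorem mul_norm_sub_sq_le_inner_sub_sub {f : E → ℝ} {g : E → E} {L : ℝ} {x y : E}
    (hxy : f x + ⟪g x, y - x⟫ + L / 2 * ‖y - x‖ ^ 2 ≤ f y)
    (hyx : f y + ⟪g y, x - y⟫ + L / 2 * ‖x - y‖ ^ 2 ≤ f x) :
    L * ‖x - y‖ ^ 2 ≤ ⟪g x - g y, x - y⟫ := by
  rw [← neg_sub x y, inner_neg_right, norm_neg] at hxy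
  rw [inner_sub_left]
  linarith

theorem norm_sub_smul_sq_le {u v : E} {L M η : ℝ} (hη : 0 ≤ η)
    (hinner : L * ‖u‖ ^ 2 ≤ ⟪v, u⟫) (hv : ‖v‖ ≤ M * ‖u‖) :
    ‖u - η • v‖ ^ 2 ≤ (1 - 2 * η * L + η ^ 2 * M ^ 2) * ‖u‖ ^ 2 := by
  have hv2 : ‖v‖ ^ 2 ≤ (M * ‖u‖) ^ 2 := pow_le_pow_left₀ (norm_nonneg v) hv 2
  rw [norm_sub_sq_real, real_inner_smul_right, norm_smul, Real.norm_of_nonneg hη,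
    real_inner_comm]
  nlinarith [mul_le_mul_of_nonneg_left hinner hη, mul_le_mul_of_nonneg_left hv2 (sq_nonneg η)]

theorem norm_sub_smul_le_sqrt_mul {u v : E} {L M η : ℝ} (hL : 0 < L) (hM : 0 < M)
    (hη : η = L / (2 * M ^ 2)) (hinner : L * ‖u‖ ^ 2 ≤ ⟪v, u⟫) (hv : ‖v‖ ≤ M * ‖u‖) :
    ‖u - η • v‖ ≤ √(1 - L ^ 2 / (4 * M ^ 2)) * ‖u‖ := by
  have hη₀ : 0 ≤ η := by rw [hη]; positivity
  have hsq := norm_sub_smul_sq_le hη₀ hinner hv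
  have hcoeff : 1 - 2 * η * L + η ^ 2 * M ^ 2 ≤ 1 - L ^ 2 / (4 * M ^ 2) := by
    have : 1 - 2 * η * L + η ^ 2 * M ^ 2 = 1 - 3 * (L ^ 2 / (4 * M ^ 2)) := by
      rw [hη]; field_simp; ring
    rw [this]
    linarith [show 0 ≤ L ^ 2 / (4 * M ^ 2) by positivity]
  calc ‖u - η • v‖ = √(‖u - η • v‖ ^ 2) := (Real.sqrt_sq (norm_nonneg _)).symm
    _ ≤ √((1 - L ^ 2 / (4 * M ^ 2)) * ‖u‖ ^ 2) :=
      Real.sqrt_le_sqrt (hsq.trans (mul_le_mul_of_nonneg_right hcoeff (sq_nonneg _)))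
    _ = √(1 - L ^ 2 / (4 * M ^ 2)) * ‖u‖ := by
      rw [Real.sqrt_mul' _ (sq_nonneg _), Real.sqrt_sq (norm_nonneg _)]

theorem norm_sub_smul_le_of_norm_sub_le {u v w : E} {L M η ξ₁ ξ₂ : ℝ} (hL : 0 < L) (hM : 0 < M)
    (hη : η = L / (2 * M ^ 2)) (hinner : L * ‖u‖ ^ 2 ≤ ⟪v, u⟫) (hv : ‖v‖ ≤ M * ‖u‖)
    (hw : ‖w - v‖ ≤ ξ₂ * ‖u‖ + ξ₁) :
    ‖u - η • w‖ ≤ (√(1 - L ^ 2 / (4 * M ^ 2)) + η * ξ₂) * ‖u‖ + η * ξ₁ := by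
  have hη₀ : 0 ≤ η := by rw [hη]; positivity
  calc ‖u - η • w‖ = ‖(u - η • v) - η • (w - v)‖ := by rw [smul_sub, sub_sub_sub_cancel_right]
    _ ≤ ‖u - η • v‖ + η * ‖w - v‖ :=
      (norm_sub_le _ _).trans_eq (by rw [norm_smul, Real.norm_of_nonneg hη₀])
    _ ≤ √(1 - L ^ 2 / (4 * M ^ 2)) * ‖u‖ + η * (ξ₂ * ‖u‖ + ξ₁) :=
      add_le_add (norm_sub_smul_le_sqrt_mul hL hM hη hinner hv)
        (mul_le_mul_of_nonneg_left hw hη₀)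
    _ = _ := by ring

end GradientStep

theorem le_pow_mul_add_div_of_le_mul_add {e : ℕ → ℝ} {ρ β : ℝ} (hρ : 0 < ρ) (hρ₁ : ρ ≤ 1)
    (hβ : 0 ≤ β) (he : ∀ n, e (n + 1) ≤ (1 - ρ) * e n + β) (n : ℕ) :
    e n ≤ (1 - ρ) ^ n * e 0 + β / ρ := by
  have hfix : ∀ n, e n - β / ρ ≤ (1 - ρ) ^ n * (e 0 - β / ρ) := by
    intro n
    induction n with
    | zero => simp
    | succ n ih =>
      calc e (n + 1) - β / ρ ≤ (1 - ρ) * (e n - β / ρ) := by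
            have : β - β / ρ = -((1 - ρ) * (β / ρ)) := by field_simp; ring
            linarith [he n]
        _ ≤ (1 - ρ) * ((1 - ρ) ^ n * (e 0 - β / ρ)) :=
          mul_le_mul_of_nonneg_left ih (by linarith)
        _ = (1 - ρ) ^ (n + 1) * (e 0 - β / ρ) := by ring
  have : 0 ≤ (1 - ρ) ^ n * (β / ρ) := by have := sub_nonneg.2 hρ₁; positivity
  linarith [hfix n]

theorem byzantine_gradient_descent_good_event_general
    (d k b q : ℕ) (hk : 0 < k)
    (Θ : Set (EuclideanSpace ℝ (Fin d)))
    (F : EuclideanSpace ℝ (Fin d) → ℝ)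
    (gF : EuclideanSpace ℝ (Fin d) → EuclideanSpace ℝ (Fin d))
    (L M : ℝ) (hL : 0 < L) (hM : 0 < M)
    (hstrong : ∀ θ ∈ Θ, ∀ θ' ∈ Θ,
      F θ + inner ℝ (gF θ) (θ' - θ) + L / 2 * ‖θ' - θ‖ ^ 2 ≤ F θ')
    (hlip : ∀ θ ∈ Θ, ∀ θ' ∈ Θ, ‖gF θ - gF θ'‖ ≤ M * ‖θ - θ'‖)
    (θstar : EuclideanSpace ℝ (Fin d)) (hθstar : θstar ∈ Θ)
    (hgrad0 : gF θstar = 0)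
    -- local empirical gradient functions of the `m = k * b` machines,
    -- grouped into `k` batches of size `b`
    (gradf : Fin k × Fin b → EuclideanSpace ℝ (Fin d) → EuclideanSpace ℝ (Fin d))
    -- batch deviation functions
    (Z : Fin k → EuclideanSpace ℝ (Fin d) → EuclideanSpace ℝ (Fin d))
    (hZ : ∀ ℓ θ, Z ℓ θ = (b : ℝ)⁻¹ • ∑ j, gradf (ℓ, j) θ - gF θ)
    (α : ℝ) (hα : α ∈ Set.Ioo (0 : ℝ) (1/2))
    (ξ₁ ξ₂ : ℝ) (hξ₁ : 0 ≤ ξ₁) (hξ₂ : 0 ≤ ξ₂)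
    -- the good event
    (hgood : (k : ℝ) * (1 - α) + q ≤
      ({ℓ | ∀ θ ∈ Θ, (2 * (1 - α) / (1 - 2 * α)) * ‖Z ℓ θ‖ ≤ ξ₂ * ‖θ - θstar‖ + ξ₁}
        : Finset (Fin k)).card)
    (η : ℝ) (hη : η = L / (2 * M ^ 2))
    (ρ : ℝ)
    (hρdef : ρ = 1 - Real.sqrt (1 - L ^ 2 / (4 * M ^ 2)) - ξ₂ * L / (2 * M ^ 2))
    (hρpos : 0 < ρ)
    -- an arbitrary Byzantine adversary: reported gradients, Byzantine sets,
    -- aggregated (geometric median) gradients, and resulting iterates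
    (g : ℕ → Fin k × Fin b → EuclideanSpace ℝ (Fin d))
    (B : ℕ → Finset (Fin k × Fin b))
    (med : ℕ → EuclideanSpace ℝ (Fin d))
    (θseq : ℕ → EuclideanSpace ℝ (Fin d))
    (hmem : ∀ t : ℕ, θseq t ∈ Θ)
    (hBcard : ∀ t : ℕ, 1 ≤ t → (B t).card ≤ q)
    (hhonest : ∀ t : ℕ, 1 ≤ t → ∀ j ∉ B t, g t j = gradf j (θseq (t - 1)))
    (hmed : ∀ t : ℕ, 1 ≤ t → ∀ y : EuclideanSpace ℝ (Fin d),
      ∑ ℓ : Fin k, ‖med t - (b : ℝ)⁻¹ • ∑ j, g t (ℓ, j)‖ ≤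
        ∑ ℓ : Fin k, ‖y - (b : ℝ)⁻¹ • ∑ j, g t (ℓ, j)‖)
    (hiter : ∀ t : ℕ, 1 ≤ t → θseq t = θseq (t - 1) - η • med t) :
    ∀ t : ℕ, 1 ≤ t →
      ‖θseq t - θstar‖ ≤ (1 - ρ) ^ t * ‖θseq 0 - θstar‖ + η * ξ₁ / ρ := by
  have hrate : √(1 - L ^ 2 / (4 * M ^ 2)) + η * ξ₂ = 1 - ρ := by rw [hρdef, hη]; ring
  have hη₀ : 0 ≤ η := by rw [hη]; positivity
  have hρ₁ : ρ ≤ 1 := by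
    linarith [Real.sqrt_nonneg (1 - L ^ 2 / (4 * M ^ 2)), mul_nonneg hη₀ hξ₂]
  have hstep (n : ℕ) : ‖θseq (n + 1) - θstar‖ ≤ (1 - ρ) * ‖θseq n - θstar‖ + η * ξ₁ := by
    have ht : 1 ≤ n + 1 := Nat.le_add_left 1 n
    have hθ := hmem n
    have hinner : L * ‖θseq n - θstar‖ ^ 2 ≤ ⟪gF (θseq n), θseq n - θstar⟫ := by
      simpa [hgrad0] using mul_norm_sub_sq_le_inner_sub_sub (hstrong _ hθ _ hθstar)
        (hstrong _ hθstar _ hθ)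
    have hgrad : ‖gF (θseq n)‖ ≤ M * ‖θseq n - θstar‖ := by
      simpa [hgrad0] using hlip _ hθ _ hθstar
    have hcard : (Fintype.card (Fin k) : ℝ) * (1 - α) + #((B (n + 1)).image Prod.fst) ≤
        k * (1 - α) + q := by
      rw [Fintype.card_fin]
      gcongr
      exact_mod_cast card_image_le.trans (hBcard _ ht)
    have hmedian : ‖med (n + 1) - gF (θseq n)‖ ≤ ξ₂ * ‖θseq n - θstar‖ + ξ₁ := by
      refine IsGeometricMedian.norm_sub_le_of_card_add_card_le (hmed _ ht)
        (by simpa using hk) hα.2 _ _ (hcard.trans hgood) ?_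
      intro ℓ hℓ hℓB
      have hbatch : (b : ℝ)⁻¹ • ∑ j, g (n + 1) (ℓ, j) - gF (θseq n) = Z ℓ (θseq n) := by
        rw [hZ]
        congr 2
        exact sum_congr rfl fun j _ =>
          hhonest _ ht _ fun hj => hℓB (mem_image_of_mem Prod.fst hj)
      rw [hbatch]
      exact (mem_filter.1 hℓ).2 _ hθ
    rw [hiter _ ht, sub_right_comm, ← hrate]
    exact norm_sub_smul_le_of_norm_sub_le hL hM hη hinner hgrad hmedian
  intro t _
  simpa only [mul_div_assoc] using le_pow_mul_add_div_of_le_mul_add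
    (e := fun n => ‖θseq n - θstar‖) hρpos hρ₁ (mul_nonneg hη₀ hξ₁) hstep t

/-- Theorem 3.1: on the good event (at least `k(1-α)+q` batches have uniformly
accurate batch gradients), Byzantine Gradient Descent with step size
`η = L/(2M²)` converges at a linear rate `1-ρ` up to the error floor `η ξ₁/ρ`,
for any Byzantine adversary corrupting at most `q` machines per iteration. -/
theorem byzantine_gradient_descent_good_event
    (d k b q : ℕ) (hk : 0 < k) (hb : 0 < b)
    (Θ : Set (EuclideanSpace ℝ (Fin d)))
    (F : EuclideanSpace ℝ (Fin d) → ℝ)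
    (gF : EuclideanSpace ℝ (Fin d) → EuclideanSpace ℝ (Fin d))
    (L M : ℝ) (hL : 0 < L) (hM : 0 < M)
    (hdiff : ∀ θ ∈ Θ, HasGradientAt F (gF θ) θ)
    (hstrong : ∀ θ ∈ Θ, ∀ θ' ∈ Θ,
      F θ + inner ℝ (gF θ) (θ' - θ) + L / 2 * ‖θ' - θ‖ ^ 2 ≤ F θ')
    (hlip : ∀ θ ∈ Θ, ∀ θ' ∈ Θ, ‖gF θ - gF θ'‖ ≤ M * ‖θ - θ'‖)
    (θstar : EuclideanSpace ℝ (Fin d)) (hθstar : θstar ∈ Θ)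
    (hgrad0 : gF θstar = 0)
    -- local empirical gradient functions of the `m = k * b` machines,
    -- grouped into `k` batches of size `b`
    (gradf : Fin k × Fin b → EuclideanSpace ℝ (Fin d) → EuclideanSpace ℝ (Fin d))
    -- batch deviation functions
    (Z : Fin k → EuclideanSpace ℝ (Fin d) → EuclideanSpace ℝ (Fin d))
    (hZ : ∀ ℓ θ, Z ℓ θ = (b : ℝ)⁻¹ • ∑ j, gradf (ℓ, j) θ - gF θ)
    (α : ℝ) (hα : α ∈ Set.Ioo (0 : ℝ) (1/2))
    (ξ₁ ξ₂ : ℝ) (hξ₁ : 0 ≤ ξ₁) (hξ₂ : 0 ≤ ξ₂)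
    -- the good event
    (hgood : (k : ℝ) * (1 - α) + q ≤
      ({ℓ | ∀ θ ∈ Θ, (2 * (1 - α) / (1 - 2 * α)) * ‖Z ℓ θ‖ ≤ ξ₂ * ‖θ - θstar‖ + ξ₁}
        : Finset (Fin k)).card)
    (η : ℝ) (hη : η = L / (2 * M ^ 2))
    (ρ : ℝ)
    (hρdef : ρ = 1 - Real.sqrt (1 - L ^ 2 / (4 * M ^ 2)) - ξ₂ * L / (2 * M ^ 2))
    (hρpos : 0 < ρ)
    -- an arbitrary Byzantine adversary: reported gradients, Byzantine sets,
    -- aggregated (geometric median) gradients, and resulting iterates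
    (g : ℕ → Fin k × Fin b → EuclideanSpace ℝ (Fin d))
    (B : ℕ → Finset (Fin k × Fin b))
    (med : ℕ → EuclideanSpace ℝ (Fin d))
    (θseq : ℕ → EuclideanSpace ℝ (Fin d))
    (hmem : ∀ t : ℕ, θseq t ∈ Θ)
    (hBcard : ∀ t : ℕ, 1 ≤ t → (B t).card ≤ q)
    (hhonest : ∀ t : ℕ, 1 ≤ t → ∀ j ∉ B t, g t j = gradf j (θseq (t - 1)))
    (hmed : ∀ t : ℕ, 1 ≤ t → ∀ y : EuclideanSpace ℝ (Fin d),
      ∑ ℓ : Fin k, ‖med t - (b : ℝ)⁻¹ • ∑ j, g t (ℓ, j)‖ ≤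
        ∑ ℓ : Fin k, ‖y - (b : ℝ)⁻¹ • ∑ j, g t (ℓ, j)‖)
    (hiter : ∀ t : ℕ, 1 ≤ t → θseq t = θseq (t - 1) - η • med t) :
    ∀ t : ℕ, 1 ≤ t →
      ‖θseq t - θstar‖ ≤ (1 - ρ) ^ t * ‖θseq 0 - θstar‖ + η * ξ₁ / ρ :=
  byzantine_gradient_descent_good_event_general d k b q hk Θ F gF L M hL hM hstrong hlip θstar
    hθstar hgrad0 gradf Z hZ α hα ξ₁ ξ₂ hξ₁ hξ₂ hgood η hη ρ hρdef hρpos g B med θseq hmem hBcard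
    hhonest hmed hiter
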